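/- Define C'_{a,b}(X) = ∂₀(Q̃_{a,b}(X)), where ∂₀(f) = (f - s₀f)/(2x₁) and s₀ replaces x₁ by -x₁. Then for all a > b ≥ 0, C'_{a,b}(X) = Q̃_{a-1}(X') Q̃_b(X') - Q̃_a(X') Q̃_{b-1}(X'), where X' = (x₂,...,x_n). -/

import Mathlib

/-!
Splitting off `x₁`, one has `Q̃_i(X) = Q̃_i(X') + x₁ Q̃_{i-1}(X')`, and `s₀` only flips the
sign of `x₁`. Hence `Q̃_{a,b} - s₀ Q̃_{a,b}` is `2x₁` times a sum whose cross terms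
`(-1)^k (Q̃_{a+k} Q̃_{b-k-1} + Q̃_{a+k-1} Q̃_{b-k})(X')` telescope; the far boundary term
vanishes because `Q̃_{-1} = 0`, and the near one gives the formula.
-/

open MvPolynomial

/-- The `i`-th elementary symmetric polynomial in the variables `{X j : j ∈ S}`,
i.e. `Q̃_i` on the variable set `S`. -/
noncomputable def Qt (S : Finset ℕ) (i : ℕ) : MvPolynomial ℕ ℤ :=
  ∑ t ∈ Finset.powersetCard i S, ∏ j ∈ t, X j

/-- The two-row `Q̃`-polynomial
`Q̃_{i,j} = Q̃_i Q̃_j + 2 ∑_{k=1}^{j} (-1)^k Q̃_{i+k} Q̃_{j-k}` (for `i ≥ j`). -/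
noncomputable def Qtp (S : Finset ℕ) (i j : ℕ) : MvPolynomial ℕ ℤ :=
  Qt S i * Qt S j +
    2 * ∑ k ∈ Finset.Icc 1 j, (-1 : MvPolynomial ℕ ℤ) ^ k * Qt S (i + k) * Qt S (j - k)

/-- Fuel-based Laplace (Pfaffian) recursion for `Q̃_λ` on a list of parts of even
length: `Q̃_ν = ∑_{j} (-1)^{j-1} Q̃_{ν_j,ν_r} Q̃_{ν∖{ν_j,ν_r}}`. -/
noncomputable def Qpf (S : Finset ℕ) : ℕ → List ℕ → MvPolynomial ℕ ℤ
  | 0, _ => 1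
  | fuel + 1, l =>
    if l.length < 2 then 1
    else
      ∑ j ∈ Finset.range (l.length - 1),
        (-1 : MvPolynomial ℕ ℤ) ^ j * Qtp S (l.getD j 0) (l.getLast?.getD 0) *
          Qpf S fuel (l.dropLast.eraseIdx j)

/-- `Q̃_λ` for a partition `λ` (list of parts), padding with a zero part
to make the length even. -/
noncomputable def Qlam (S : Finset ℕ) (l : List ℕ) : MvPolynomial ℕ ℤ :=
  Qpf S (l.length + 1) (if Even l.length then l else l ++ [0])

/-- `Q̃_i` with integer index, vanishing for `i < 0`. -/
noncomputable def QtZ (S : Finset ℕ) (i : ℤ) : MvPolynomial ℕ ℤ :=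
  if 0 ≤ i then Qt S i.toNat else 0

/-- `Q̃_{i,j}` with integer indices (`i ≥ j`), vanishing when an index is negative. -/
noncomputable def QtpZ (S : Finset ℕ) (i j : ℤ) : MvPolynomial ℕ ℤ :=
  QtZ S i * QtZ S j +
    2 * ∑ k ∈ Finset.Icc 1 j.toNat,
      (-1 : MvPolynomial ℕ ℤ) ^ k * QtZ S (i + k) * QtZ S (j - k)

/-- The operator `s₀`, replacing `x₁ = X 0` by `-x₁`. -/
noncomputable def s0 : MvPolynomial ℕ ℤ →+* MvPolynomial ℕ ℤ :=
  (MvPolynomial.bind₁ fun j => if j = 0 then -(X 0 : MvPolynomial ℕ ℤ) else X j).toRingHom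

theorem Multiset.esymm_cons_succ {R : Type*} [CommSemiring R] (a : R) (s : Multiset R) (n : ℕ) :
    (a ::ₘ s).esymm (n + 1) = s.esymm (n + 1) + a * s.esymm n := by
  simp only [Multiset.esymm, Multiset.powersetCard_cons, Multiset.map_add, Multiset.sum_add,
    Multiset.map_map, Function.comp_def, Multiset.prod_cons, Multiset.sum_map_mul_left]

theorem Qt_eq_esymm (S : Finset ℕ) (i : ℕ) : Qt S i = (S.val.map X).esymm i :=
  (Finset.esymm_map_val X S i).symm

theorem Qt_insert_succ {S : Finset ℕ} {x : ℕ} (hx : x ∉ S) (i : ℕ) :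
    Qt (insert x S) (i + 1) = Qt S (i + 1) + X x * Qt S i := by
  simp only [Qt_eq_esymm, Finset.insert_val_of_notMem hx, Multiset.map_cons,
    Multiset.esymm_cons_succ]

theorem QtZ_of_neg (S : Finset ℕ) {i : ℤ} (hi : i < 0) : QtZ S i = 0 :=
  if_neg hi.not_ge

theorem QtZ_insert {S : Finset ℕ} {x : ℕ} (hx : x ∉ S) (i : ℤ) :
    QtZ (insert x S) i = QtZ S i + X x * QtZ S (i - 1) := by
  rcases lt_trichotomy i 0 with hi | rfl | hi
  · simp [QtZ_of_neg _ hi, QtZ_of_neg _ (show i - 1 < 0 by omega)]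
  · simp [QtZ, Qt]
  · obtain ⟨m, rfl⟩ : ∃ m : ℕ, i = m + 1 := ⟨i.toNat - 1, by omega⟩
    simp only [QtZ, Int.add_sub_cancel, Int.toNat_natCast_add_one, Int.toNat_natCast]
    simp only [show (0 : ℤ) ≤ m + 1 by omega, show (0 : ℤ) ≤ m by omega, if_true,
      Qt_insert_succ hx]

theorem s0_X_zero : s0 (X 0) = -X 0 := by
  simp [s0]

theorem s0_Qt_of_zero_notMem {S : Finset ℕ} (h0 : 0 ∉ S) (i : ℕ) : s0 (Qt S i) = Qt S i := by
  simp only [Qt, map_sum, map_prod]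
  refine Finset.sum_congr rfl fun t ht => Finset.prod_congr rfl fun j hj => ?_
  have hj0 : j ≠ 0 := fun h => h0 (h ▸ (Finset.mem_powersetCard.mp ht).1 hj)
  simp [s0, hj0]

theorem s0_QtZ_of_zero_notMem {S : Finset ℕ} (h0 : 0 ∉ S) (i : ℤ) :
    s0 (QtZ S i) = QtZ S i := by
  unfold QtZ
  split_ifs
  · exact s0_Qt_of_zero_notMem h0 _
  · exact map_zero s0

theorem s0_QtZ_insert_zero {S : Finset ℕ} (h0 : 0 ∉ S) (i : ℤ) :
    s0 (QtZ (insert 0 S) i) = QtZ S i - X 0 * QtZ S (i - 1) := by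
  rw [QtZ_insert h0, map_add, map_mul, s0_X_zero, s0_QtZ_of_zero_notMem h0,
    s0_QtZ_of_zero_notMem h0, neg_mul, ← sub_eq_add_neg]

section QPair

variable {R : Type*} [CommRing R]

/-- `Q̃_{a,b}` built from an arbitrary sequence `q` in place of `i ↦ Q̃_i`. -/
def qPair (q : ℤ → R) (a b : ℤ) : R :=
  q a * q b + 2 * ∑ k ∈ Finset.Icc 1 b.toNat, (-1 : R) ^ k * q (a + k) * q (b - k)

theorem QtpZ_eq_qPair (S : Finset ℕ) : QtpZ S = qPair (QtZ S) := rfl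

theorem RingHom.map_qPair {R' : Type*} [CommRing R'] (f : R →+* R') (q : ℤ → R) (a b : ℤ) :
    f (qPair q a b) = qPair (f ∘ q) a b := by
  simp [qPair, map_ofNat]

theorem sum_Icc_neg_one_pow_mul_add_telescope (g : ℤ → R) (m : ℕ) :
    ∑ k ∈ Finset.Icc 1 m, (-1 : R) ^ k * (g k + g (k - 1)) = (-1) ^ m * g m - g 0 := by
  induction m with
  | zero => simp
  | succ m ih =>
    rw [Finset.sum_Icc_succ_top (by omega), ih, Nat.cast_succ, add_sub_cancel_right, pow_succ]
    ring

theorem qPair_add_sub_qPair_sub (E : ℤ → R) (hE : ∀ i < 0, E i = 0) (x : R) (a b : ℤ) :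
    qPair (fun i => E i + x * E (i - 1)) a b - qPair (fun i => E i - x * E (i - 1)) a b
      = 2 * x * (E (a - 1) * E b - E a * E (b - 1)) := by
  set m := b.toNat
  set g : ℤ → R := fun j => E (a + j) * E (b - j - 1) with hg
  have hcross : ∀ k ∈ Finset.Icc 1 m,
      (-1 : R) ^ k * (E (a + k) + x * E (a + k - 1)) * (E (b - k) + x * E (b - k - 1))
        - (-1) ^ k * (E (a + k) - x * E (a + k - 1)) * (E (b - k) - x * E (b - k - 1))
      = 2 * x * ((-1) ^ k * (g k + g (k - 1))) := by
    intro k _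
    simp only [hg]
    ring_nf
  have hboundary : E (b - m - 1) = 0 := hE _ (by omega)
  calc _ = 2 * x * (E (a - 1) * E b + E a * E (b - 1))
          + 2 * ∑ k ∈ Finset.Icc 1 m,
            ((-1 : R) ^ k * (E (a + k) + x * E (a + k - 1)) * (E (b - k) + x * E (b - k - 1))
              - (-1) ^ k * (E (a + k) - x * E (a + k - 1)) * (E (b - k) - x * E (b - k - 1))) := by
        simp only [qPair, Finset.sum_sub_distrib]
        ring
    _ = 2 * x * (E (a - 1) * E b + E a * E (b - 1) + 2 * ((-1) ^ m * g m - g 0)) := by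
        rw [Finset.sum_congr rfl hcross, ← Finset.mul_sum, sum_Icc_neg_one_pow_mul_add_telescope]
        ring
    _ = _ := by
        simp only [hg, hboundary, add_zero, zero_sub, sub_zero, mul_zero]
        ring

end QPair

theorem QtpZ_insert_zero_sub_s0 {S : Finset ℕ} (h0 : 0 ∉ S) (a b : ℤ) :
    QtpZ (insert 0 S) a b - s0 (QtpZ (insert 0 S) a b)
      = 2 * X 0 * (QtZ S (a - 1) * QtZ S b - QtZ S a * QtZ S (b - 1)) := by
  have hQ : QtZ (insert 0 S) = fun i => QtZ S i + X 0 * QtZ S (i - 1) := funext (QtZ_insert h0)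
  have hs0 : s0 ∘ QtZ (insert 0 S) = fun i => QtZ S i - X 0 * QtZ S (i - 1) :=
    funext (s0_QtZ_insert_zero h0)
  rw [QtpZ_eq_qPair, RingHom.map_qPair, hs0, hQ]
  exact qPair_add_sub_qPair_sub _ (fun i hi => QtZ_of_neg S hi) _ a b

/-- Stated multiplied through by `2x₁`, i.e. as `f - s₀ f = 2x₁ ∂₀ f`. -/
theorem Cprime_pair_formula_general (n : ℕ) (hn : 1 ≤ n) (a b : ℤ) :
    QtpZ (Finset.range n) a b - s0 (QtpZ (Finset.range n) a b)
      = 2 * X 0 *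
        (QtZ (Finset.Ico 1 n) (a - 1) * QtZ (Finset.Ico 1 n) b
          - QtZ (Finset.Ico 1 n) a * QtZ (Finset.Ico 1 n) (b - 1)) := by
  rw [Finset.range_eq_Ico, ← Finset.insert_Ico_add_one_left_eq_Ico hn]
  exact QtpZ_insert_zero_sub_s0 (by simp) a b

/-- `C'_{a,b} = ∂₀(Q̃_{a,b})` equals `Q̃_{a-1}(X')Q̃_b(X') - Q̃_a(X')Q̃_{b-1}(X')`
for `a > b ≥ 0`, where `∂₀(f) = (f - s₀ f)/(2x₁)` and `X' = (x₂,…,x_n)`.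
Stated multiplied through by `2x₁`. -/
theorem Cprime_pair_formula (n : ℕ) (hn : 1 ≤ n) (a b : ℤ) (hb : 0 ≤ b) (hab : b < a) :
    QtpZ (Finset.range n) a b - s0 (QtpZ (Finset.range n) a b)
      = 2 * X 0 *
        (QtZ (Finset.Ico 1 n) (a - 1) * QtZ (Finset.Ico 1 n) b
          - QtZ (Finset.Ico 1 n) a * QtZ (Finset.Ico 1 n) (b - 1)) :=
  Cprime_pair_formula_general n hn a b
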